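/- arXiv:2410.19236 — 5 statements merged into one kernel-verified Lean document; each statement's English description precedes it below -/
import Mathlib

section
/- Vanishing of Möbius coefficients for low-order Fourier models: let ω = e^{2πi/q} and let f(m) = ∑_y F[y] ω^{⟨m,y⟩} for a function F : (ℤ_q)^n → ℂ. If k ∈ (ℤ_q)^n is such that for every y with F[y] ≠ 0 there exists a coordinate i with y_i = 0 and k_i ≠ 0, then the q-ary Möbius coefficient M[k] = ∑_{m ≤ k} (-1)^{‖k-m‖₀} f(m) equals 0. -/
open Finset Complex

/-- `m ≤ k` in the q-ary Möbius order: each coordinate of `m` equals that of `k` or is 0. -/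
def qle {q n : ℕ} (m k : Fin n → ZMod q) : Prop := ∀ i, m i = k i ∨ m i = 0

instance {q n : ℕ} (m k : Fin n → ZMod q) : Decidable (qle m k) := by
  unfold qle; infer_instance

/-- number of nonzero coordinates -/
def zeroNorm {q n : ℕ} (v : Fin n → ZMod q) : ℕ :=
  (Finset.univ.filter fun i => v i ≠ 0).card

/-- inner product in (ℤ_q)^n -/
def zip {q n : ℕ} (m y : Fin n → ZMod q) : ZMod q := ∑ i, m i * y i

theorem mobius_vanishes_of_low_order_fourier (q n : ℕ) [NeZero q] (hq : 2 ≤ q) (hn : 1 ≤ n)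
    (F : (Fin n → ZMod q) → ℂ) (f : (Fin n → ZMod q) → ℂ)
    (hf : ∀ m, f m = ∑ y, F y * Complex.exp (2 * Real.pi * Complex.I / q) ^ (zip m y).val)
    (k : Fin n → ZMod q)
    (hk : ∀ y, F y ≠ 0 → ∃ i, y i = 0 ∧ k i ≠ 0) :
    ∑ m ∈ Finset.univ.filter (fun m => qle m k), (-1 : ℂ) ^ zeroNorm (k - m) * f m = 0 := by
  classical
  set ω : ℂ := Complex.exp (2 * Real.pi * Complex.I / q) with hω
  set S := Finset.univ.filter (fun m : Fin n → ZMod q => qle m k) with hS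
  have sign_prod : ∀ v : Fin n → ZMod q,
      (-1 : ℂ) ^ zeroNorm v = ∏ j, (if v j = 0 then (1:ℂ) else -1) := by
    intro v
    unfold zeroNorm
    rw [Finset.prod_ite, Finset.prod_const, Finset.prod_const, one_pow, one_mul]
  have key : ∀ y : Fin n → ZMod q,
      ∑ m ∈ S, (-1:ℂ) ^ zeroNorm (k - m) * (F y * ω ^ (zip m y).val) = 0 := by
    intro y
    by_cases hFy : F y = 0
    · simp [hFy]
    obtain ⟨i, hyi, hki⟩ := hk y hFy
    refine Finset.sum_involution
      (fun m _ => Function.update m i (if m i = 0 then k i else 0)) ?_ ?_ ?_ ?_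
    · -- cancellation
      intro m hm
      set c := if m i = 0 then k i else 0 with hc
      set m' := Function.update m i c with hm'
      have hzip : zip m' y = zip m y := by
        unfold zip
        refine Finset.sum_congr rfl fun j _ => ?_
        by_cases hj : j = i
        · subst hj; simp [hyi]
        · simp [hm', Function.update_of_ne hj]
      have hrest : ∀ j, j ≠ i → (k - m') j = (k - m) j := by
        intro j hj
        simp [hm', Function.update_of_ne hj]
      have hsign : (-1:ℂ) ^ zeroNorm (k - m') = -((-1:ℂ) ^ zeroNorm (k - m)) := by
        rw [sign_prod, sign_prod]
        rw [← Finset.mul_prod_erase Finset.univ _ (Finset.mem_univ i),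
            ← Finset.mul_prod_erase Finset.univ
              (fun j => if (k - m) j = 0 then (1:ℂ) else -1) (Finset.mem_univ i)]
        have hprod : ∏ j ∈ Finset.univ.erase i, (if (k - m') j = 0 then (1:ℂ) else -1)
            = ∏ j ∈ Finset.univ.erase i, (if (k - m) j = 0 then (1:ℂ) else -1) := by
          refine Finset.prod_congr rfl fun j hj => ?_
          rw [hrest j (Finset.mem_erase.1 hj).1]
        rw [hprod, ← neg_mul]
        congr 1
        have hmk : m i = k i ∨ m i = 0 := (Finset.mem_filter.1 hm).2 i
        by_cases h0 : m i = 0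
        · have hc' : c = k i := by simp [hc, h0]
          have h1 : (k - m') i = 0 := by simp [hm', hc']
          have h2 : (k - m) i = k i := by simp [h0]
          rw [h1, h2]
          simp [hki]
        · have hmi : m i = k i := hmk.resolve_right h0
          have hc' : c = 0 := by simp [hc, h0]
          have h1 : (k - m') i = k i := by simp [hm', hc']
          have h2 : (k - m) i = 0 := by simp [hmi]
          rw [h1, h2]
          simp [hki]
      rw [hzip, hsign]
      ring
    · -- g a ≠ a when term nonzero
      intro m hm _
      intro h
      have := congrFun h i
      simp only [Function.update_self] at this
      by_cases h0 : m i = 0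
      · rw [if_pos h0, h0] at this; exact hki this
      · rw [if_neg h0] at this; exact h0 this.symm
    · -- membership
      intro m hm
      refine Finset.mem_filter.2 ⟨Finset.mem_univ _, fun j => ?_⟩
      by_cases hj : j = i
      · rw [hj]
        simp only [Function.update_self]
        by_cases h0 : m i = 0
        · left; simp [h0]
        · right; simp [h0]
      · simp only [Function.update_of_ne hj]
        exact (Finset.mem_filter.1 hm).2 j
    · -- involutive
      intro m hm
      funext j
      by_cases hj : j = i
      · rw [hj]
        simp only [Function.update_self]
        by_cases h0 : m i = 0
        · rw [if_pos h0, if_neg hki]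
          exact h0.symm
        · rw [if_neg h0, if_pos rfl]
          exact (((Finset.mem_filter.1 hm).2 i).resolve_right h0).symm
      · simp [Function.update_of_ne hj]
  calc ∑ m ∈ S, (-1 : ℂ) ^ zeroNorm (k - m) * f m
      = ∑ m ∈ S, ∑ y, (-1:ℂ) ^ zeroNorm (k - m) * (F y * ω ^ (zip m y).val) := by
        refine Finset.sum_congr rfl fun m _ => ?_
        rw [hf, Finset.mul_sum]
    _ = ∑ y, ∑ m ∈ S, (-1:ℂ) ^ zeroNorm (k - m) * (F y * ω ^ (zip m y).val) :=
        Finset.sum_comm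
    _ = 0 := by simp [key]
end

section
/- Uniform-marginalization value function via the q-ary Möbius transform: fix f : (ℤ_q)^n → ℝ with q-ary Möbius transform M, and define for T ⊆ {1,…,n} the value function v(T) = (1/q^{|T̄|}) ∑_{m̄ ∈ (ℤ_q)^{|T̄|}} f(0_T, m̄), i.e., the average of f over all assignments to the coordinates outside T with the coordinates in T set to 0. Then v(T) = ∑_{m̄ ∈ (ℤ_q)^{|T̄|}} q^{-‖m̄‖₀} M[r^{m̄}_{T̄}], where r^{m̄}_{T̄} is the vector that is 0 on T and equals m̄ on T̄. -/
open Finset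

/-- the q-ary Möbius transform of `f` -/
def qMobius {q n : ℕ} [NeZero q] (f : (Fin n → ZMod q) → ℝ) (k : Fin n → ZMod q) : ℝ :=
  ∑ m ∈ Finset.univ.filter (fun m => qle m k), (-1 : ℝ) ^ zeroNorm (k - m) * f m

/-- vectors that vanish on the coordinates in `T` (i.e. are supported on the complement of `T`) -/
def suppOff {q n : ℕ} [NeZero q] (T : Finset (Fin n)) : Finset (Fin n → ZMod q) :=
  Finset.univ.filter fun m => ∀ i ∈ T, m i = 0

/-- uniform-marginalization value function: average of `f` over all assignments to the
coordinates outside `T`, with the coordinates in `T` set to `0`. -/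
noncomputable def uniformValue {q n : ℕ} [NeZero q] (f : (Fin n → ZMod q) → ℝ)
    (T : Finset (Fin n)) : ℝ :=
  (1 / (q : ℝ) ^ (n - T.card)) * ∑ m ∈ suppOff T, f m

set_option maxHeartbeats 1000000 in
lemma sum_suppOff_pow (q n : ℕ) [NeZero q] (U : Finset (Fin n)) (c : ℝ) :
    ∑ g ∈ suppOff (q := q) U, c ^ zeroNorm g = (1 + ((q : ℝ) - 1) * c) ^ (n - U.card) := by
  have hpi : suppOff (q := q) U =
      Fintype.piFinset (fun i => if i ∈ U then ({0} : Finset (ZMod q)) else Finset.univ) := by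
    ext g
    simp only [suppOff, Finset.mem_filter, Finset.mem_univ, true_and, Fintype.mem_piFinset]
    constructor
    · intro h i
      by_cases hi : i ∈ U <;> simp [hi, h i]
    · intro h i hi
      have := h i
      simpa [hi] using this
  have hterm : ∀ g : Fin n → ZMod q,
      c ^ zeroNorm g = ∏ i : Fin n, (if g i ≠ 0 then c else 1) := by
    intro g
    rw [Finset.prod_ite, Finset.prod_const, Finset.prod_const, one_pow, mul_one]
    rfl
  rw [hpi]
  calc ∑ g ∈ Fintype.piFinset (fun i => if i ∈ U then ({0} : Finset (ZMod q)) else Finset.univ),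
        c ^ zeroNorm g
      = ∑ g ∈ Fintype.piFinset (fun i => if i ∈ U then ({0} : Finset (ZMod q)) else Finset.univ),
        ∏ i : Fin n, (if g i ≠ 0 then c else 1) :=
        Finset.sum_congr rfl fun g _ => hterm g
    _ = ∏ i : Fin n, ∑ x ∈ (if i ∈ U then ({0} : Finset (ZMod q)) else Finset.univ),
        (if x ≠ 0 then c else 1) :=
        (Finset.prod_univ_sum (fun i => if i ∈ U then ({0} : Finset (ZMod q)) else Finset.univ)
          (fun _ x => if x ≠ 0 then c else 1)).symm
    _ = (1 + ((q : ℝ) - 1) * c) ^ (n - U.card) := by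
        have hfac : ∀ i : Fin n, (∑ x ∈ (if i ∈ U then ({0} : Finset (ZMod q)) else Finset.univ),
            (if x ≠ 0 then c else 1)) = (if i ∈ U then 1 else 1 + ((q : ℝ) - 1) * c) := by
          intro i
          by_cases hi : i ∈ U
          · simp [hi]
          · simp only [hi, if_false]
            rw [Finset.sum_ite, Finset.sum_const, Finset.sum_const]
            have h1 : (Finset.univ.filter fun x : ZMod q => ¬ x ≠ 0).card = 1 := by
              simp [Finset.filter_eq']
            have h2 : (Finset.univ.filter fun x : ZMod q => x ≠ 0).card = q - 1 := by
              have := Finset.card_filter_add_card_filter_not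
                (s := (Finset.univ : Finset (ZMod q))) (p := fun x => x ≠ 0)
              have hcard : (Finset.univ : Finset (ZMod q)).card = q := by
                rw [Finset.card_univ, ZMod.card]
              omega
            have hq1 : (1 : ℕ) ≤ q := NeZero.one_le
            rw [h1, h2, nsmul_eq_mul, one_smul, Nat.cast_sub hq1]
            push_cast
            ring
        rw [Finset.prod_congr rfl fun i _ => hfac i, Finset.prod_ite, Finset.prod_const,
          Finset.prod_const, one_pow, one_mul]
        congr 1
        have := Finset.card_filter_add_card_filter_not
          (s := (Finset.univ : Finset (Fin n))) (p := fun i => i ∈ U)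
        have hU : (Finset.univ.filter fun i => i ∈ U).card = U.card := by
          simp [Finset.filter_mem_eq_inter]
        simp only [Finset.card_univ, Fintype.card_fin] at this
        omega

lemma zeroNorm_add_disjoint {q n : ℕ} (k g : Fin n → ZMod q)
    (h : ∀ i, k i = 0 ∨ g i = 0) : zeroNorm (k + g) = zeroNorm k + zeroNorm g := by
  unfold zeroNorm
  rw [← Finset.card_union_of_disjoint]
  · congr 1
    ext i
    rcases h i with h0 | h0 <;> simp [h0, Pi.add_apply]
  · rw [Finset.disjoint_filter]
    intro i _ hki hgi
    rcases h i with h0 | h0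
    · exact hki h0
    · exact hgi h0

set_option maxHeartbeats 1000000 in
theorem uniform_value_from_qary_mobius (q n : ℕ) [NeZero q] (hq : 2 ≤ q) (hn : 1 ≤ n)
    (f : (Fin n → ZMod q) → ℝ) (T : Finset (Fin n)) :
    uniformValue f T = ∑ m ∈ suppOff T, (1 / (q : ℝ) ^ zeroNorm m) * qMobius f m := by
  have hq0 : (q : ℝ) ≠ 0 := Nat.cast_ne_zero.mpr (NeZero.ne q)
  have step1 : ∑ m ∈ suppOff T, (1 / (q : ℝ) ^ zeroNorm m) * qMobius f m
      = ∑ m ∈ suppOff T, ∑ k ∈ Finset.univ.filter (fun k => qle k m),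
          (1 / (q : ℝ) ^ zeroNorm m) * ((-1 : ℝ) ^ zeroNorm (m - k) * f k) := by
    refine Finset.sum_congr rfl fun m _ => ?_
    rw [qMobius, Finset.mul_sum]
  rw [step1]
  have hswap : ∑ m ∈ suppOff T, ∑ k ∈ Finset.univ.filter (fun k => qle k m),
          (1 / (q : ℝ) ^ zeroNorm m) * ((-1 : ℝ) ^ zeroNorm (m - k) * f k)
      = ∑ k ∈ suppOff T, ∑ m ∈ (suppOff T).filter (fun m => qle k m),
          (1 / (q : ℝ) ^ zeroNorm m) * ((-1 : ℝ) ^ zeroNorm (m - k) * f k) := by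
    refine Finset.sum_comm' ?_
    intro m k
    simp only [Finset.mem_filter, Finset.mem_univ, true_and, and_true, suppOff]
    constructor
    · rintro ⟨hm, hk⟩
      refine ⟨⟨hm, hk⟩, fun i hi => ?_⟩
      rcases hk i with h | h
      · rw [h]; exact hm i hi
      · exact h
    · rintro ⟨h, _⟩
      exact h
  rw [hswap]
  have key : ∀ k ∈ suppOff (q := q) T,
      ∑ m ∈ (suppOff T).filter (fun m => qle k m),
          (1 / (q : ℝ) ^ zeroNorm m) * ((-1 : ℝ) ^ zeroNorm (m - k) * f k)
      = (1 / (q : ℝ)) ^ (n - T.card) * f k := by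
    intro k hk
    have hkT : ∀ i ∈ T, k i = 0 := by simpa [suppOff] using hk
    set A : Finset (Fin n) := Finset.univ.filter (fun i => k i ≠ 0) with hA
    have hdisj : Disjoint T A := by
      rw [Finset.disjoint_left]
      intro i hiT hiA
      rw [hA, Finset.mem_filter] at hiA
      exact hiA.2 (hkT i hiT)
    have hcardU : (T ∪ A).card = T.card + zeroNorm k := by
      rw [Finset.card_union_of_disjoint hdisj, hA]; rfl
    have hle : T.card + zeroNorm k ≤ n := by
      have h := Finset.card_le_univ (T ∪ A)
      rw [hcardU] at h
      have hfc : Fintype.card (Fin n) = n := Fintype.card_fin n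
      omega
    have hbij : ∑ m ∈ (suppOff T).filter (fun m => qle k m),
        (1 / (q : ℝ) ^ zeroNorm m) * ((-1 : ℝ) ^ zeroNorm (m - k) * f k)
        = ∑ g ∈ suppOff (q := q) (T ∪ A),
          (-1 / (q : ℝ)) ^ (zeroNorm g) * ((1 / (q : ℝ)) ^ (zeroNorm k) * f k) := by
      refine Finset.sum_nbij' (fun m => m - k) (fun g => g + k) ?_ ?_ ?_ ?_ ?_
      · intro m hm
        rw [Finset.mem_filter] at hm
        obtain ⟨hmS, hqle⟩ := hm
        have hmT : ∀ i ∈ T, m i = 0 := by simpa [suppOff] using hmS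
        simp only [suppOff, Finset.mem_filter, Finset.mem_univ, true_and]
        intro i hi
        rcases Finset.mem_union.mp hi with h | h
        · simp [Pi.sub_apply, hmT i h, hkT i h]
        · rw [hA, Finset.mem_filter] at h
          rcases hqle i with h' | h'
          · simp [Pi.sub_apply, h']
          · exact absurd h' h.2
      · intro g hg
        have hgU : ∀ i ∈ T ∪ A, g i = 0 := by simpa [suppOff] using hg
        rw [Finset.mem_filter]
        constructor
        · simp only [suppOff, Finset.mem_filter, Finset.mem_univ, true_and]
          intro i hi
          simp [Pi.add_apply, hgU i (Finset.mem_union_left _ hi), hkT i hi]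
        · intro i
          by_cases h0 : k i = 0
          · right; exact h0
          · left
            have hiA : i ∈ A := by rw [hA, Finset.mem_filter]; exact ⟨Finset.mem_univ i, h0⟩
            simp [Pi.add_apply, hgU i (Finset.mem_union_right _ hiA)]
      · intro m _; ring
      · intro g _; ring
      · intro m hm
        rw [Finset.mem_filter] at hm
        have hdis : ∀ i, k i = 0 ∨ (m - k) i = 0 := by
          intro i
          by_cases h0 : k i = 0
          · exact Or.inl h0
          · refine Or.inr ?_
            rcases hm.2 i with h' | h'
            · simp [Pi.sub_apply, h']
            · exact absurd h' h0
        have hZ : zeroNorm m = zeroNorm k + zeroNorm (m - k) := by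
          have h := zeroNorm_add_disjoint k (m - k) hdis
          have he : k + (m - k) = m := by ring
          rw [he] at h
          exact h
        have e1 : (-1 / (q : ℝ)) = (-1 : ℝ) * (1 / (q : ℝ)) := by ring
        rw [hZ, pow_add, e1, mul_pow, one_div_pow, one_div_pow]
        ring
    rw [hbij, ← Finset.sum_mul, sum_suppOff_pow, hcardU]
    have hc : 1 + ((q : ℝ) - 1) * (-1 / (q : ℝ)) = 1 / (q : ℝ) := by field_simp; ring
    rw [hc, ← mul_assoc, ← pow_add]
    congr 2
    omega
  rw [Finset.sum_congr rfl key, uniformValue, Finset.mul_sum]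
  refine Finset.sum_congr rfl fun k _ => ?_
  rw [div_pow, one_pow]
end

section
/- Set Möbius transform from the q-ary Möbius transform: with v(T) defined as the uniform average of f over coordinates outside T (with coordinates in T set to 0), the set Möbius transform satisfies a(v, S) = (-1)^{|S|} ∑_{k : k_S > 0} q^{-‖k‖₀} M[k], where the sum is over all vectors k ∈ (ℤ_q)^n whose coordinates indexed by S are all nonzero. -/
open Finset

/-- the set Möbius transform of a value function -/
noncomputable def setMobius {n : ℕ} (v : Finset (Fin n) → ℝ) (S : Finset (Fin n)) : ℝ :=
  ∑ T ∈ S.powerset, (-1 : ℝ) ^ (S.card - T.card) * v T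

/-- the Shapley value of feature `i` -/
noncomputable def shapleyValue {n : ℕ} (v : Finset (Fin n) → ℝ) (i : Fin n) : ℝ :=
  ∑ T ∈ (Finset.univ.erase i).powerset,
    ((T.card.factorial * (n - T.card - 1).factorial : ℕ) : ℝ) / (n.factorial : ℝ) *
      (v (insert i T) - v T)

/- ----------------- auxiliary lemmas ----------------- -/

lemma powerset_card_sum {α : Type*} [DecidableEq α] (A : Finset α) (x : ℝ) :
    ∑ T ∈ A.powerset, x ^ T.card = (x + 1) ^ A.card := by
  have h := Finset.prod_add (fun _ : α => x) (fun _ => 1) A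
  simp only [Finset.prod_const, one_pow, mul_one] at h
  rw [← h]

lemma prod_ite_pow {n : ℕ} (c : ℝ) (p : Fin n → Prop) [DecidablePred p] :
    ∏ i, (if p i then c else 1) = c ^ (Finset.univ.filter p).card := by
  rw [← Finset.prod_filter, Finset.prod_const]

/-- T-side coefficient computation. -/
lemma coeffT (q n : ℕ) (hq : 2 ≤ q) {S A : Finset (Fin n)} (hA : A ⊆ S) (hS : S.card ≤ n) :
    ∑ T ∈ A.powerset, (-1:ℝ)^(S.card - T.card) * (1/(q:ℝ)^(n - T.card))
      = (-1:ℝ)^S.card * (1/(q:ℝ))^n * (1-(q:ℝ))^A.card := by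
  have hq0 : (q:ℝ) ≠ 0 := by positivity
  have key : ∀ T ∈ A.powerset,
      (-1:ℝ)^(S.card - T.card) * (1/(q:ℝ)^(n - T.card))
        = ((-1:ℝ)^S.card * (1/(q:ℝ))^n) * (-(q:ℝ))^T.card := by
    intro T hT
    have hTS : T.card ≤ S.card := Finset.card_le_card ((Finset.mem_powerset.mp hT).trans hA)
    have hTn : T.card ≤ n := hTS.trans hS
    have h1 : (-1:ℝ)^S.card = (-1)^(S.card - T.card) * (-1)^T.card := by
      rw [← pow_add, Nat.sub_add_cancel hTS]
    have h3 : ((q:ℝ))^n = (q:ℝ)^(n - T.card) * (q:ℝ)^T.card := by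
      rw [← pow_add, Nat.sub_add_cancel hTn]
    have h2 : ((-1:ℝ)^T.card) * ((-1:ℝ)^T.card) = 1 := by
      rw [← pow_add]; exact Even.neg_one_pow ⟨T.card, rfl⟩
    rw [h1, one_div_pow, h3, neg_pow]
    field_simp
    ring_nf
    rw [mul_comm T.card 2, pow_mul]
    norm_num
  rw [Finset.sum_congr rfl key, ← Finset.mul_sum, powerset_card_sum]
  ring_nf

/-- the per-coordinate factor set for the k-sum -/
def tset {q n : ℕ} [NeZero q] (S : Finset (Fin n)) (m : Fin n → ZMod q) (i : Fin n) :
    Finset (ZMod q) :=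
  if m i = 0 then (if i ∈ S then Finset.univ.filter (fun x : ZMod q => x ≠ 0) else Finset.univ)
  else {m i}

lemma card_nonzero (q : ℕ) [NeZero q] :
    (Finset.univ.filter (fun x : ZMod q => x ≠ 0)).card = q - 1 := by
  rw [Finset.filter_ne', Finset.card_erase_of_mem (Finset.mem_univ _), Finset.card_univ,
    ZMod.card]

/-- K-side coefficient computation. -/
lemma coeffK (q n : ℕ) [NeZero q] (hq : 2 ≤ q) (S : Finset (Fin n)) (m : Fin n → ZMod q) :
    ∑ k ∈ Finset.univ.filter (fun k : Fin n → ZMod q => (∀ i ∈ S, k i ≠ 0) ∧ qle m k),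
        (1/(q:ℝ)^zeroNorm k) * (-1:ℝ)^zeroNorm (k - m)
      = (1/(q:ℝ))^n * (1-(q:ℝ))^(S.filter (fun i => m i = 0)).card := by
  have hq0 : (q:ℝ) ≠ 0 := by positivity
  have hq1 : (1:ℕ) ≤ q := le_trans one_le_two hq
  -- the filtered set is a piFinset
  have hset : Finset.univ.filter (fun k : Fin n → ZMod q => (∀ i ∈ S, k i ≠ 0) ∧ qle m k)
      = Fintype.piFinset (tset S m) := by
    ext k
    rw [Finset.mem_filter, Fintype.mem_piFinset]
    simp only [Finset.mem_univ, true_and, tset, qle]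
    constructor
    · rintro ⟨h1, h2⟩ i
      by_cases hm : m i = 0
      · rw [if_pos hm]
        by_cases hiS : i ∈ S
        · rw [if_pos hiS, Finset.mem_filter]
          exact ⟨Finset.mem_univ _, h1 i hiS⟩
        · rw [if_neg hiS]; exact Finset.mem_univ _
      · rw [if_neg hm, Finset.mem_singleton]
        rcases h2 i with h | h
        · exact h.symm
        · exact absurd h hm
    · intro h
      refine ⟨fun i hiS => ?_, fun i => ?_⟩
      · have hi := h i
        by_cases hm : m i = 0
        · rw [if_pos hm, if_pos hiS, Finset.mem_filter] at hi
          exact hi.2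
        · rw [if_neg hm, Finset.mem_singleton] at hi
          rw [hi]; exact hm
      · have hi := h i
        by_cases hm : m i = 0
        · exact Or.inr hm
        · rw [if_neg hm, Finset.mem_singleton] at hi
          exact Or.inl hi.symm
  -- the summand is a product over coordinates
  have hsummand : ∀ k : Fin n → ZMod q,
      (1/(q:ℝ)^zeroNorm k) * (-1:ℝ)^zeroNorm (k - m)
        = ∏ i, ((if k i = 0 then (1:ℝ) else 1/(q:ℝ)) * (if k i = m i then 1 else -1)) := by
    intro k
    rw [Finset.prod_mul_distrib]
    have e1 : (1/(q:ℝ)^zeroNorm k) = ∏ i, (if k i = 0 then (1:ℝ) else 1/(q:ℝ)) := by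
      have h : ∀ i, (if k i = 0 then (1:ℝ) else 1/(q:ℝ)) = (if k i ≠ 0 then (1/(q:ℝ)) else 1) := by
        intro i; by_cases h : k i = 0 <;> simp [h]
      rw [Finset.prod_congr rfl (fun i _ => h i), prod_ite_pow, one_div_pow]
      rfl
    have e2 : ((-1:ℝ))^zeroNorm (k - m) = ∏ i, (if k i = m i then (1:ℝ) else -1) := by
      have h : ∀ i, (if k i = m i then (1:ℝ) else -1) = (if (k - m) i ≠ 0 then (-1:ℝ) else 1) := by
        intro i
        simp only [Pi.sub_apply, sub_ne_zero]
        by_cases h : k i = m i <;> simp [h]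
      rw [Finset.prod_congr rfl (fun i _ => h i), prod_ite_pow]
      rfl
    rw [e1, e2]
  rw [hset, Finset.sum_congr rfl (fun k _ => hsummand k),
    ← Finset.prod_univ_sum (tset S m)
      (fun i x => (if x = 0 then (1:ℝ) else 1/(q:ℝ)) * (if x = m i then 1 else -1))]
  -- evaluate per-coordinate sums
  have hfac : ∀ i, (∑ x ∈ tset S m i, ((if x = 0 then (1:ℝ) else 1/(q:ℝ)) *
      (if x = m i then 1 else -1)))
      = (1/(q:ℝ)) * (if i ∈ S ∧ m i = 0 then (1-(q:ℝ)) else 1) := by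
    intro i
    by_cases hm : m i = 0
    · by_cases hiS : i ∈ S
      · rw [show tset S m i = Finset.univ.filter (fun x : ZMod q => x ≠ 0) from by
          unfold tset; rw [if_pos hm, if_pos hiS]]
        have hx : ∀ x ∈ Finset.univ.filter (fun x : ZMod q => x ≠ 0),
            ((if x = 0 then (1:ℝ) else 1/(q:ℝ)) * (if x = m i then 1 else -1))
              = (1/(q:ℝ)) * (-1) := by
          intro x hxx
          rw [Finset.mem_filter] at hxx
          rw [if_neg hxx.2, if_neg (fun h => hxx.2 (h.trans hm))]
        rw [Finset.sum_congr rfl hx, Finset.sum_const, card_nonzero, if_pos ⟨hiS, hm⟩]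
        push_cast [nsmul_eq_mul, Nat.cast_sub hq1]
        field_simp
        ring
      · rw [show tset S m i = (Finset.univ : Finset (ZMod q)) from by
          unfold tset; rw [if_pos hm, if_neg hiS]]
        rw [← Finset.sum_filter_add_sum_filter_not Finset.univ (fun x : ZMod q => x = 0),
          Finset.filter_eq', if_pos (Finset.mem_univ _), Finset.sum_singleton,
          if_pos rfl, one_mul, if_pos hm.symm,
          if_neg (fun h => hiS h.1)]
        have hx : ∀ x ∈ Finset.univ.filter (fun x : ZMod q => ¬x = 0),
            ((if x = 0 then (1:ℝ) else 1/(q:ℝ)) * (if x = m i then 1 else -1))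
              = (1/(q:ℝ)) * (-1) := by
          intro x hxx
          rw [Finset.mem_filter] at hxx
          rw [if_neg hxx.2, if_neg (fun h => hxx.2 (h.trans hm))]
        rw [Finset.sum_congr rfl hx, Finset.sum_const, card_nonzero]
        push_cast [nsmul_eq_mul, Nat.cast_sub hq1]
        field_simp
        ring
    · rw [show tset S m i = {m i} from if_neg hm, Finset.sum_singleton,
        if_neg hm, if_pos rfl, if_neg (fun h => hm h.2)]
  rw [Finset.prod_congr rfl (fun i _ => hfac i), Finset.prod_mul_distrib, Finset.prod_const,
    prod_ite_pow, Finset.card_univ, Fintype.card_fin]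
  have hAeq : Finset.univ.filter (fun i => i ∈ S ∧ m i = 0) = S.filter (fun i => m i = 0) := by
    ext i
    simp [Finset.mem_filter]
  rw [hAeq]

theorem set_mobius_from_qary_mobius (q n : ℕ) [NeZero q] (hq : 2 ≤ q) (hn : 1 ≤ n)
    (f : (Fin n → ZMod q) → ℝ) (S : Finset (Fin n)) :
    setMobius (uniformValue f) S =
      (-1 : ℝ) ^ S.card *
        ∑ k ∈ Finset.univ.filter (fun k : Fin n → ZMod q => ∀ i ∈ S, k i ≠ 0),
          (1 / (q : ℝ) ^ zeroNorm k) * qMobius f k := by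
  have hS : S.card ≤ n := by
    have := Finset.card_le_univ S
    simpa using this
  -- LHS
  have lhs_eq : setMobius (uniformValue f) S =
      ∑ m : Fin n → ZMod q,
        ((-1:ℝ)^S.card * (1/(q:ℝ))^n * (1-(q:ℝ))^(S.filter (fun i => m i = 0)).card) * f m := by
    unfold setMobius uniformValue suppOff
    simp only [Finset.sum_filter, Finset.mul_sum, mul_ite, mul_zero, ← mul_assoc]
    rw [Finset.sum_comm]
    refine Finset.sum_congr rfl (fun m _ => ?_)
    have hps : S.powerset.filter (fun T => ∀ i ∈ T, m i = 0)
        = (S.filter (fun i => m i = 0)).powerset := by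
      ext T
      simp only [Finset.mem_filter, Finset.mem_powerset]
      constructor
      · rintro ⟨h1, h2⟩ i hiT
        exact Finset.mem_filter.mpr ⟨h1 hiT, h2 i hiT⟩
      · intro h
        refine ⟨fun i hiT => (Finset.mem_filter.mp (h hiT)).1,
          fun i hiT => (Finset.mem_filter.mp (h hiT)).2⟩
    calc ∑ T ∈ S.powerset, (if ∀ i ∈ T, m i = 0
            then (-1:ℝ)^(S.card - T.card) * (1/(q:ℝ)^(n - T.card)) * f m else 0)
        = ∑ T ∈ S.powerset.filter (fun T => ∀ i ∈ T, m i = 0),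
            (-1:ℝ)^(S.card - T.card) * (1/(q:ℝ)^(n - T.card)) * f m := by
          rw [Finset.sum_filter]
      _ = (∑ T ∈ (S.filter (fun i => m i = 0)).powerset,
            (-1:ℝ)^(S.card - T.card) * (1/(q:ℝ)^(n - T.card))) * f m := by
          rw [hps, Finset.sum_mul]
      _ = _ := by rw [coeffT q n hq (Finset.filter_subset _ _) hS]
  -- RHS
  have rhs_eq : (-1 : ℝ) ^ S.card *
      ∑ k ∈ Finset.univ.filter (fun k : Fin n → ZMod q => ∀ i ∈ S, k i ≠ 0),
        (1 / (q : ℝ) ^ zeroNorm k) * qMobius f k =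
      ∑ m : Fin n → ZMod q,
        ((-1:ℝ)^S.card * (1/(q:ℝ))^n * (1-(q:ℝ))^(S.filter (fun i => m i = 0)).card) * f m := by
    calc (-1 : ℝ) ^ S.card *
        ∑ k ∈ Finset.univ.filter (fun k : Fin n → ZMod q => ∀ i ∈ S, k i ≠ 0),
          (1 / (q : ℝ) ^ zeroNorm k) * qMobius f k
        = ∑ k ∈ Finset.univ.filter (fun k : Fin n → ZMod q => ∀ i ∈ S, k i ≠ 0),
            ∑ m : Fin n → ZMod q, (if qle m k then
              ((1/(q:ℝ)^zeroNorm k) * (-1:ℝ)^zeroNorm (k - m)) * ((-1:ℝ)^S.card * f m)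
              else 0) := by
          rw [Finset.mul_sum]
          refine Finset.sum_congr rfl (fun k _ => ?_)
          unfold qMobius
          rw [Finset.sum_filter, Finset.mul_sum, Finset.mul_sum]
          refine Finset.sum_congr rfl (fun m _ => ?_)
          split <;> ring
      _ = ∑ m : Fin n → ZMod q,
            ∑ k ∈ Finset.univ.filter (fun k : Fin n → ZMod q => ∀ i ∈ S, k i ≠ 0),
              (if qle m k then
              ((1/(q:ℝ)^zeroNorm k) * (-1:ℝ)^zeroNorm (k - m)) * ((-1:ℝ)^S.card * f m)
              else 0) := Finset.sum_comm
      _ = ∑ m : Fin n → ZMod q,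
            ((-1:ℝ)^S.card * (1/(q:ℝ))^n * (1-(q:ℝ))^(S.filter (fun i => m i = 0)).card) * f m := by
          refine Finset.sum_congr rfl (fun m _ => ?_)
          rw [← Finset.sum_filter, Finset.filter_filter, ← Finset.sum_mul,
            coeffK q n hq S m]
          ring
  rw [lhs_eq, rhs_eq]
end

section
/- SHAP zero main identity (Theorem 1): for f : (ℤ_q)^n → ℝ with q-ary Möbius transform M, and the value function v given by uniform marginalization of absent features, the Shapley value of feature i satisfies I(i) = − ∑_{k : k_i ≠ 0} M[k] / (‖k‖₀ · q^{‖k‖₀}), where the sum is over all k ∈ (ℤ_q)^n whose i-th coordinate is nonzero. -/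
open Finset

lemma natC (n s : ℕ) (hs : 1 ≤ s) (hsn : s ≤ n) :
    s * ∑ t ∈ Finset.range (n - s + 1),
        (n - s).choose t * (t.factorial * (n - t - 1).factorial) = n.factorial := by
  set N := n - s with hN
  have hterm : ∀ t ∈ Finset.range (N + 1),
      N.choose t * (t.factorial * (n - t - 1).factorial)
        = N.factorial * ((s - 1).factorial * (n - t - 1).choose (s - 1)) := by
    intro t ht
    rw [Finset.mem_range] at ht
    have htN : t ≤ N := by omega
    have h1 : (n - t - 1).choose (s - 1) * (s - 1).factorial * (N - t).factorial
        = (n - t - 1).factorial := by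
      have h := Nat.choose_mul_factorial_mul_factorial (show s - 1 ≤ n - t - 1 by omega)
      rwa [show n - t - 1 - (s - 1) = N - t by omega] at h
    have h2 : N.choose t * t.factorial * (N - t).factorial = N.factorial :=
      Nat.choose_mul_factorial_mul_factorial htN
    calc N.choose t * (t.factorial * (n - t - 1).factorial)
        = N.choose t * (t.factorial *
            ((n - t - 1).choose (s - 1) * (s - 1).factorial * (N - t).factorial)) := by rw [h1]
      _ = (N.choose t * t.factorial * (N - t).factorial) *
            ((s - 1).factorial * (n - t - 1).choose (s - 1)) := by ring
      _ = N.factorial * ((s - 1).factorial * (n - t - 1).choose (s - 1)) := by rw [h2]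
  rw [Finset.sum_congr rfl hterm]
  rw [← Finset.mul_sum, ← Finset.mul_sum]
  have hrefl : ∑ t ∈ Finset.range (N + 1), (n - t - 1).choose (s - 1)
      = ∑ j ∈ Finset.range (N + 1), (j + (s - 1)).choose (s - 1) := by
    rw [← Finset.sum_range_reflect]
    refine Finset.sum_congr rfl fun j hj => ?_
    rw [Finset.mem_range] at hj
    congr 1
    omega
  rw [hrefl, Nat.sum_range_add_choose]
  have h3 : (N + (s - 1) + 1) = n := by omega
  have h4 : (s - 1) + 1 = s := by omega
  rw [h3, h4]
  have h5 : n.choose s * s.factorial * (n - s).factorial = n.factorial :=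
    Nat.choose_mul_factorial_mul_factorial hsn
  have h6 : s * (s - 1).factorial = s.factorial := Nat.mul_factorial_pred (by omega)
  calc s * (N.factorial * ((s - 1).factorial * n.choose s))
      = n.choose s * (s * (s-1).factorial) * N.factorial := by ring
    _ = n.factorial := by rw [h6, hN, h5]

lemma realC (n s : ℕ) (hs : 1 ≤ s) (hsn : s ≤ n) :
    ∑ t ∈ Finset.range (n - s + 1),
        ((n - s).choose t : ℝ) *
          (((t.factorial * (n - t - 1).factorial : ℕ) : ℝ) / (n.factorial : ℝ))
      = 1 / (s : ℝ) := by
  have h := natC n s hs hsn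
  have hfac : (n.factorial : ℝ) ≠ 0 := Nat.cast_ne_zero.mpr n.factorial_ne_zero
  have hs0 : (s : ℝ) ≠ 0 := Nat.cast_ne_zero.mpr (by omega)
  have hcast : (s : ℝ) * ∑ t ∈ Finset.range (n - s + 1),
      ((n - s).choose t : ℝ) * ((t.factorial * (n - t - 1).factorial : ℕ) : ℝ)
        = (n.factorial : ℝ) := by
    push_cast
    exact_mod_cast h
  rw [eq_div_iff hs0, Finset.sum_mul]
  have hcg : ∀ t ∈ Finset.range (n - s + 1),
      (((n - s).choose t : ℝ) * (((t.factorial * (n - t - 1).factorial : ℕ) : ℝ) / (n.factorial : ℝ))) * s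
        = (s : ℝ) * (((n - s).choose t : ℝ) * ((t.factorial * (n - t - 1).factorial : ℕ) : ℝ)) / (n.factorial : ℝ) := by
    intro t _; ring
  rw [Finset.sum_congr rfl hcg, ← Finset.sum_div, ← Finset.mul_sum, hcast, div_self hfac]

lemma key {q n : ℕ} [NeZero q] (f : (Fin n → ZMod q) → ℝ) (T : Finset (Fin n)) :
    uniformValue f T = ∑ k ∈ suppOff T, qMobius f k * ((q : ℝ)⁻¹) ^ zeroNorm k := by
  classical
  have hq0 : (q : ℝ) ≠ 0 := Nat.cast_ne_zero.mpr (NeZero.ne q)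
  set w : (Fin n → ZMod q) → Fin n → ZMod q → ℝ := fun m j a =>
    (if (j ∈ T → a = 0) then (1:ℝ) else 0) * ((if (m j = a ∨ m j = 0) then (1:ℝ) else 0) *
      ((if a = m j then (1:ℝ) else -1) * (if a = 0 then (1:ℝ) else (q:ℝ)⁻¹))) with hw
  have step1 : ∀ m k : Fin n → ZMod q,
      (if ∀ j ∈ T, k j = 0 then (1:ℝ) else 0) * ((if qle m k then (1:ℝ) else 0) *
        ((-1 : ℝ) ^ zeroNorm (k - m) * ((q:ℝ)⁻¹) ^ zeroNorm k)) = ∏ j, w m j (k j) := by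
    intro m k
    have h1 : (∏ j, if (j ∈ T → k j = 0) then (1:ℝ) else 0)
        = if ∀ j ∈ T, k j = 0 then 1 else 0 := by
      rw [Fintype.prod_boole]
      congr 1
    have h2 : (∏ j, if (m j = k j ∨ m j = 0) then (1:ℝ) else 0)
        = if qle m k then 1 else 0 := by
      rw [Fintype.prod_boole]
      simp [qle]
      congr 1
    have h3 : (∏ j, if k j = m j then (1:ℝ) else -1) = (-1 : ℝ) ^ zeroNorm (k - m) := by
      rw [zeroNorm, Finset.card_filter, ← Finset.prod_pow_eq_pow_sum]
      refine Finset.prod_congr rfl fun j _ => ?_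
      by_cases h : k j = m j <;>
        simp [h, Pi.sub_apply, sub_eq_zero]
    have h4 : (∏ j, if k j = 0 then (1:ℝ) else (q:ℝ)⁻¹) = ((q:ℝ)⁻¹) ^ zeroNorm k := by
      rw [zeroNorm, Finset.card_filter, ← Finset.prod_pow_eq_pow_sum]
      refine Finset.prod_congr rfl fun j _ => ?_
      by_cases h : k j = 0 <;> simp [h]
    rw [← h1, ← h2, ← h3, ← h4, ← Finset.prod_mul_distrib, ← Finset.prod_mul_distrib,
      ← Finset.prod_mul_distrib]
  have step2 : ∀ (m : Fin n → ZMod q) (j : Fin n),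
      ∑ a : ZMod q, w m j a = if j ∈ T then (if m j = 0 then (1:ℝ) else 0) else (q:ℝ)⁻¹ := by
    intro m j
    by_cases hjT : j ∈ T
    · rw [if_pos hjT, Fintype.sum_eq_single (0 : ZMod q)]
      · by_cases hm : m j = 0 <;> simp [hw, hjT, hm, eq_comm]
      · intro b hb
        simp [hw, hjT, hb]
    · rw [if_neg hjT]
      by_cases hm : m j = 0
      · have hwval : ∀ a : ZMod q, w m j a = if a = 0 then (1:ℝ) else -(q:ℝ)⁻¹ := by
          intro a
          by_cases ha : a = 0 <;> simp [hw, hjT, hm, ha, eq_comm]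
        have hsplit : ∀ a : ZMod q, (if a = 0 then (1:ℝ) else -(q:ℝ)⁻¹)
            = (if a = 0 then (1:ℝ) + (q:ℝ)⁻¹ else 0) - (q:ℝ)⁻¹ := by
          intro a; split_ifs <;> ring
        rw [Finset.sum_congr rfl fun a _ => (hwval a).trans (hsplit a),
          Finset.sum_sub_distrib, Finset.sum_ite_eq' Finset.univ (0 : ZMod q),
          Finset.sum_const, Finset.card_univ, ZMod.card]
        simp only [Finset.mem_univ, if_pos, nsmul_eq_mul]
        field_simp
        ring
      · rw [Fintype.sum_eq_single (m j)]
        · simp [hw, hjT, hm]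
        · intro b hb
          have hbm : ¬ m j = b := fun h => hb h.symm
          simp [hw, hjT, hm, hbm]
  have step3 : ∀ m : Fin n → ZMod q,
      (∏ j, ∑ a : ZMod q, w m j a)
        = (if ∀ j ∈ T, m j = 0 then (1:ℝ) else 0) * ((q:ℝ)⁻¹) ^ (n - T.card) := by
    intro m
    simp only [step2]
    by_cases hm : ∀ j ∈ T, m j = 0
    · rw [if_pos hm, one_mul, ← Finset.prod_mul_prod_compl T]
      have hT1 : (∏ j ∈ T, if j ∈ T then (if m j = 0 then (1:ℝ) else 0) else (q:ℝ)⁻¹) = 1 :=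
        Finset.prod_eq_one fun j hj => by simp [hj, hm j hj]
      have hT2 : (∏ j ∈ Tᶜ, if j ∈ T then (if m j = 0 then (1:ℝ) else 0) else (q:ℝ)⁻¹)
          = ((q:ℝ)⁻¹) ^ (n - T.card) := by
        rw [Finset.prod_congr rfl fun j hj => if_neg (Finset.mem_compl.mp hj),
          Finset.prod_const, Finset.card_compl, Fintype.card_fin]
      rw [hT1, hT2, one_mul]
    · rw [if_neg hm, zero_mul]
      push_neg at hm
      obtain ⟨j, hjT, hjm⟩ := hm
      exact Finset.prod_eq_zero (Finset.mem_univ j) (by simp [hjT, hjm])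
  calc uniformValue f T
      = ∑ m, f m * ((if ∀ j ∈ T, m j = 0 then (1:ℝ) else 0) * ((q:ℝ)⁻¹) ^ (n - T.card)) := by
        rw [uniformValue, suppOff, Finset.sum_filter, Finset.mul_sum]
        refine Finset.sum_congr rfl fun m _ => ?_
        rw [one_div, ← inv_pow]
        split_ifs <;> ring
    _ = ∑ m, f m * ∏ j, ∑ a : ZMod q, w m j a :=
        Finset.sum_congr rfl fun m _ => by rw [step3]
    _ = ∑ m, f m * ∑ k : Fin n → ZMod q, ∏ j, w m j (k j) := by
        refine Finset.sum_congr rfl fun m _ => ?_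
        rw [Finset.prod_univ_sum]
        simp [Fintype.piFinset_univ]
    _ = ∑ k : Fin n → ZMod q, ∑ m, f m * ∏ j, w m j (k j) := by
        simp_rw [Finset.mul_sum]
        exact Finset.sum_comm
    _ = ∑ k ∈ suppOff T, qMobius f k * ((q : ℝ)⁻¹) ^ zeroNorm k := by
        rw [suppOff, Finset.sum_filter]
        refine Finset.sum_congr rfl fun k _ => ?_
        rw [qMobius, Finset.sum_filter]
        by_cases hP : ∀ j ∈ T, k j = 0
        · rw [if_pos hP, Finset.sum_mul]
          refine Finset.sum_congr rfl fun m _ => ?_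
          rw [← step1 m k, if_pos hP]
          split_ifs <;> ring
        · rw [if_neg hP]
          refine Finset.sum_eq_zero fun m _ => ?_
          rw [← step1 m k, if_neg hP]
          ring

lemma suppOff_insert {q n : ℕ} [NeZero q] (T : Finset (Fin n)) (i : Fin n) :
    suppOff (q := q) (insert i T) = (suppOff T).filter (fun k => k i = 0) := by
  ext k
  simp [suppOff, Finset.forall_mem_insert, and_comm]

lemma diffLemma {q n : ℕ} [NeZero q] (f : (Fin n → ZMod q) → ℝ) (T : Finset (Fin n)) (i : Fin n) :
    uniformValue f (insert i T) - uniformValue f T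
      = - ∑ k ∈ (suppOff T).filter (fun k => ¬ k i = 0),
          qMobius f k * ((q : ℝ)⁻¹) ^ zeroNorm k := by
  rw [key, key, suppOff_insert,
    ← Finset.sum_filter_add_sum_filter_not (suppOff T) (fun k => k i = 0)]
  ring

lemma lemC {q n : ℕ} (i : Fin n) (k : Fin n → ZMod q) (hki : k i ≠ 0) :
    ∑ T ∈ (Finset.univ.erase i).powerset.filter (fun T => ∀ j ∈ T, k j = 0),
      ((T.card.factorial * (n - T.card - 1).factorial : ℕ) : ℝ) / (n.factorial : ℝ)
      = 1 / (zeroNorm k : ℝ) := by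
  classical
  set U : Finset (Fin n) := Finset.univ.filter (fun j => k j = 0) with hU
  have hset : (Finset.univ.erase i).powerset.filter (fun T => ∀ j ∈ T, k j = 0)
      = U.powerset := by
    ext T
    simp only [Finset.mem_filter, Finset.mem_powerset, hU, Finset.subset_iff,
      Finset.mem_erase, Finset.mem_univ, and_true, true_and]
    constructor
    · rintro ⟨_, h2⟩ j hj
      exact h2 j hj
    · intro h
      exact ⟨fun j hj hji => hki (hji ▸ h _ hj), fun j hj => h _ hj⟩
  have hs1 : 1 ≤ zeroNorm k :=
    Finset.card_pos.mpr ⟨i, Finset.mem_filter.mpr ⟨Finset.mem_univ i, hki⟩⟩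
  have hsn : zeroNorm k ≤ n := by
    refine le_trans (Finset.card_filter_le _ _) ?_
    simp
  have hUcard : U.card = n - zeroNorm k := by
    have hcompl : U = (Finset.univ.filter (fun j : Fin n => k j ≠ 0))ᶜ := by
      ext j; simp [hU]
    rw [hcompl, Finset.card_compl, Fintype.card_fin, zeroNorm]
  rw [hset, Finset.sum_powerset_apply_card
    (f := fun t => ((t.factorial * (n - t - 1).factorial : ℕ) : ℝ) / (n.factorial : ℝ)), hUcard]
  simp_rw [nsmul_eq_mul]
  exact realC n (zeroNorm k) hs1 hsn

theorem shapzero_main_identity (q n : ℕ) [NeZero q] (hq : 2 ≤ q) (hn : 1 ≤ n)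
    (f : (Fin n → ZMod q) → ℝ) (i : Fin n) :
    shapleyValue (uniformValue f) i =
      - ∑ k ∈ Finset.univ.filter (fun k : Fin n → ZMod q => k i ≠ 0),
          qMobius f k / ((zeroNorm k : ℝ) * (q : ℝ) ^ zeroNorm k) := by
  classical
  rw [shapleyValue]
  have h1 : ∀ T ∈ (Finset.univ.erase i).powerset,
      ((T.card.factorial * (n - T.card - 1).factorial : ℕ) : ℝ) / (n.factorial : ℝ) *
        (uniformValue f (insert i T) - uniformValue f T)
      = - ∑ k ∈ Finset.univ.filter (fun k : Fin n → ZMod q => k i ≠ 0),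
          (if ∀ j ∈ T, k j = 0 then
            ((T.card.factorial * (n - T.card - 1).factorial : ℕ) : ℝ) / (n.factorial : ℝ) *
              (qMobius f k * ((q : ℝ)⁻¹) ^ zeroNorm k) else 0) := by
    intro T _
    rw [diffLemma]
    have hflt : (suppOff T).filter (fun k => ¬ k i = 0)
        = (Finset.univ.filter (fun k : Fin n → ZMod q => k i ≠ 0)).filter
            (fun k => ∀ j ∈ T, k j = 0) := by
      ext kk
      simp only [suppOff, Finset.mem_filter, Finset.mem_univ, true_and, ne_eq]
      tauto
    rw [hflt, Finset.sum_filter, mul_neg, Finset.mul_sum]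
    congr 1
    refine Finset.sum_congr rfl fun kk _ => ?_
    split_ifs <;> ring
  rw [Finset.sum_congr rfl h1, Finset.sum_neg_distrib, Finset.sum_comm]
  congr 1
  refine Finset.sum_congr rfl fun k hk => ?_
  have hki : k i ≠ 0 := (Finset.mem_filter.mp hk).2
  rw [← Finset.sum_filter, ← Finset.sum_mul, lemC i k hki]
  rw [one_div, inv_pow, div_eq_mul_inv, mul_inv]
  ring
end

section
/- Faith-Shap interactions from the q-ary Möbius transform: for f : (ℤ_q)^n → ℝ whose q-ary Möbius transform M vanishes on all vectors k with ‖k‖₀ > ℓ, and value function v given by uniform marginalization, the Faith-Shap interaction index of a set T with |T| ≤ ℓ equals I^{FSI}(T) = (-1)^{|T|} ∑_{k : k_T > 0} q^{-‖k‖₀} M[k], where the sum ranges over vectors k whose coordinates in T are all nonzero. -/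
open Finset

/-- the Faith-Shap interaction index of maximum order `ℓ`, written via the set Möbius
transform of the value function `v`. -/
noncomputable def faithShap {n : ℕ} (v : Finset (Fin n) → ℝ) (ℓ : ℕ) (T : Finset (Fin n)) : ℝ :=
  setMobius v T +
    (-1 : ℝ) ^ (ℓ - T.card) * ((T.card : ℝ) / ((ℓ : ℝ) + (T.card : ℝ))) * (ℓ.choose T.card : ℝ) *
      ∑ S ∈ (Finset.univ : Finset (Fin n)).powerset.filter (fun S => T ⊂ S ∧ ℓ < S.card),
        (((S.card - 1).choose ℓ : ℝ) / ((S.card + ℓ - 1).choose (ℓ + T.card) : ℝ)) *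
          setMobius v S

/-! ### Auxiliary lemmas -/

section Aux

set_option linter.unusedSectionVars false

variable {q n : ℕ} [NeZero q]

/-- product-of-sums trick for functions `Fin n → ZMod q` -/
lemma sum_pi_prod (g : Fin n → ZMod q → ℝ) :
    ∑ m : Fin n → ZMod q, ∏ i, g i (m i) = ∏ i, ∑ x : ZMod q, g i x :=
  (Fintype.prod_sum g).symm

lemma neg_one_pow_zeroNorm (v : Fin n → ZMod q) :
    (-1 : ℝ) ^ zeroNorm v = ∏ i, (if v i = 0 then (1 : ℝ) else -1) := by
  rw [zeroNorm, Finset.prod_ite, Finset.prod_const, Finset.prod_const, one_pow, one_mul]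

lemma prod_ite_eq_indicator (p k : Fin n → ZMod q) :
    (∏ i, if p i = k i then (1 : ℝ) else 0) = if p = k then 1 else 0 := by
  by_cases hpk : p = k
  · simp [hpk]
  · obtain ⟨i, hi⟩ : ∃ i, p i ≠ k i := by
      by_contra h; push_neg at h; exact hpk (funext h)
    rw [if_neg hpk]
    exact Finset.prod_eq_zero (Finset.mem_univ i) (if_neg hi)

lemma neg_one_sub {a b : ℕ} (h : a ≤ b) : (-1 : ℝ) ^ (b - a) = (-1) ^ b * (-1) ^ a := by
  have h1 : (-1 : ℝ) ^ (b - a) * (-1) ^ a = (-1) ^ b := by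
    rw [← pow_add, Nat.sub_add_cancel h]
  have h2 : ((-1 : ℝ)) ^ a * (-1) ^ a = 1 := by
    rw [← mul_pow]; norm_num
  calc (-1 : ℝ) ^ (b - a) = (-1 : ℝ) ^ (b - a) * ((-1) ^ a * (-1) ^ a) := by rw [h2, mul_one]
    _ = ((-1 : ℝ) ^ (b - a) * (-1) ^ a) * (-1) ^ a := by ring
    _ = (-1) ^ b * (-1) ^ a := by rw [h1]

lemma sum_powerset_neg_one_real (A : Finset (Fin n)) :
    (∑ T ∈ A.powerset, (-1 : ℝ) ^ T.card) = if A = ∅ then 1 else 0 := by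
  have h := Finset.sum_powerset_neg_one_pow_card (x := A)
  have : (∑ T ∈ A.powerset, (-1 : ℝ) ^ T.card)
      = ((∑ T ∈ A.powerset, (-1 : ℤ) ^ T.card : ℤ) : ℝ) := by push_cast; rfl
  rw [this, h]
  split <;> simp

/-- per-coordinate factor for the Möbius inversion -/
def hco (k p : Fin n → ZMod q) (i : Fin n) (x : ZMod q) : ℝ :=
  if (x = k i ∨ x = 0) ∧ (p i = x ∨ p i = 0) then (if x = p i then 1 else -1) else 0

lemma hco_sum (k p : Fin n → ZMod q) (i : Fin n) :
    ∑ x : ZMod q, hco k p i x = if p i = k i then 1 else 0 := by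
  by_cases hp : p i = 0
  · by_cases hk : k i = 0
    · rw [if_pos (hp.trans hk.symm)]
      have e : ∀ x : ZMod q, hco k p i x = if x = 0 then 1 else 0 := by
        intro x; unfold hco; by_cases hx : x = 0 <;> simp [hx, hp, hk]
      simp [e]
    · rw [if_neg (by rw [hp]; exact fun h => hk h.symm)]
      have e : ∀ x : ZMod q,
          hco k p i x = (if x = 0 then 1 else 0) + (if x = k i then -1 else 0) := by
        intro x; unfold hco
        by_cases hx : x = 0
        · simp [hx, hp, Ne.symm hk]
        · by_cases hxk : x = k i <;> simp [hx, hxk, hp, hk]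
      simp [e, Finset.sum_add_distrib]
  · have e : ∀ x : ZMod q,
        hco k p i x = if (x = p i ∧ p i = k i) then 1 else 0 := by
      intro x; unfold hco
      by_cases hx : x = p i
      · by_cases hpk : p i = k i <;> simp [hx, hpk, hp]
      · have h1 : ¬((x = k i ∨ x = 0) ∧ (p i = x ∨ p i = 0)) := by
          rintro ⟨-, h2 | h2⟩
          · exact hx h2.symm
          · exact hp h2
        rw [if_neg h1, if_neg (fun h => hx h.1)]
    by_cases hpk : p i = k i <;> simp [e, hpk]

lemma qMobius_inversion (f : (Fin n → ZMod q) → ℝ) (k : Fin n → ZMod q) :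
    ∑ m ∈ Finset.univ.filter (fun m => qle m k), qMobius f m = f k := by
  have key : ∀ p : Fin n → ZMod q,
      (∑ m : Fin n → ZMod q,
          if qle m k ∧ qle p m then (-1 : ℝ) ^ zeroNorm (m - p) else 0)
        = if p = k then 1 else 0 := by
    intro p
    have e1 : ∀ m : Fin n → ZMod q,
        (if qle m k ∧ qle p m then (-1 : ℝ) ^ zeroNorm (m - p) else 0)
          = ∏ i, hco k p i (m i) := by
      intro m
      by_cases hc : qle m k ∧ qle p m
      · rw [if_pos hc, neg_one_pow_zeroNorm]
        refine Finset.prod_congr rfl fun i _ => ?_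
        unfold hco
        have hcond : (m i = k i ∨ m i = 0) ∧ (p i = m i ∨ p i = 0) := ⟨hc.1 i, hc.2 i⟩
        rw [if_pos hcond]
        simp only [Pi.sub_apply, sub_eq_zero]
      · rw [if_neg hc, not_and_or] at *
        rcases hc with hc | hc
        · rw [qle] at hc; push_neg at hc; obtain ⟨i, h1, h2⟩ := hc
          refine (Finset.prod_eq_zero (Finset.mem_univ i) ?_).symm
          unfold hco; rw [if_neg]; tauto
        · rw [qle] at hc; push_neg at hc; obtain ⟨i, h1, h2⟩ := hc
          refine (Finset.prod_eq_zero (Finset.mem_univ i) ?_).symm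
          unfold hco; rw [if_neg]; tauto
    simp only [e1]
    rw [sum_pi_prod]
    simp only [hco_sum]
    exact prod_ite_eq_indicator p k
  rw [Finset.sum_filter]
  have e2 : ∀ m : Fin n → ZMod q,
      (if qle m k then qMobius f m else 0)
        = ∑ p : Fin n → ZMod q,
            (if qle m k ∧ qle p m then (-1 : ℝ) ^ zeroNorm (m - p) else 0) * f p := by
    intro m
    by_cases hm : qle m k
    · simp only [if_pos hm, hm, true_and, if_true, qMobius, Finset.sum_filter, ite_mul, zero_mul]
    · simp [hm]
  simp only [e2]
  rw [Finset.sum_comm]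
  have e3 : ∀ p : Fin n → ZMod q,
      (∑ m : Fin n → ZMod q,
          (if qle m k ∧ qle p m then (-1 : ℝ) ^ zeroNorm (m - p) else 0) * f p)
        = if p = k then f p else 0 := by
    intro p
    rw [← Finset.sum_mul, key p, ite_mul, one_mul, zero_mul]
  simp only [e3]
  simp

/-- per-coordinate factor for the counting argument -/
def gco (S : Finset (Fin n)) (p : Fin n → ZMod q) (i : Fin n) (x : ZMod q) : ℝ :=
  if (i ∈ S → x = 0) ∧ (p i = x ∨ p i = 0) then 1 else 0

lemma gco_sum (S : Finset (Fin n)) (p : Fin n → ZMod q) (i : Fin n) :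
    ∑ x : ZMod q, gco S p i x
      = if i ∈ S then (if p i = 0 then 1 else 0) else (if p i = 0 then (q : ℝ) else 1) := by
  by_cases hiS : i ∈ S
  · rw [if_pos hiS]
    by_cases hp : p i = 0
    · have e : ∀ x : ZMod q, gco S p i x = if x = 0 then 1 else 0 := by
        intro x; unfold gco; by_cases hx : x = 0 <;> simp [hx, hp, hiS]
      simp [e, hp]
    · have e : ∀ x : ZMod q, gco S p i x = 0 := by
        intro x; unfold gco
        rw [if_neg]
        rintro ⟨h1, h2 | h2⟩
        · exact hp ((h2.trans (h1 hiS)))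
        · exact hp h2
      simp [e, hp]
  · rw [if_neg hiS]
    by_cases hp : p i = 0
    · have e : ∀ x : ZMod q, gco S p i x = 1 := by
        intro x; unfold gco; simp [hiS, hp]
      simp [e, hp, ZMod.card]
    · have e : ∀ x : ZMod q, gco S p i x = if x = p i then 1 else 0 := by
        intro x; unfold gco
        by_cases hx : x = p i
        · simp [hx, hiS]
        · rw [if_neg, if_neg hx]
          rintro ⟨-, h | h⟩
          · exact hx h.symm
          · exact hp h
      simp [e, hp]

lemma count_qle (S : Finset (Fin n)) (p : Fin n → ZMod q) :
    (∑ m ∈ suppOff S, if qle p m then (1 : ℝ) else 0)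
      = if (∀ i ∈ S, p i = 0)
          then (q : ℝ) ^ ((Finset.univ.filter fun i => i ∉ S ∧ p i = 0).card) else 0 := by
  have e1 : ∀ m : Fin n → ZMod q,
      (if (∀ i ∈ S, m i = 0) ∧ qle p m then (1 : ℝ) else 0) = ∏ i, gco S p i (m i) := by
    intro m
    by_cases hc : (∀ i ∈ S, m i = 0) ∧ qle p m
    · rw [if_pos hc]
      refine (Finset.prod_eq_one fun i _ => ?_).symm
      unfold gco
      rw [if_pos ⟨fun hi => hc.1 i hi, hc.2 i⟩]
    · rw [if_neg hc, not_and_or] at *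
      rcases hc with hc | hc
      · push_neg at hc; obtain ⟨i, h1, h2⟩ := hc
        refine (Finset.prod_eq_zero (Finset.mem_univ i) ?_).symm
        unfold gco; rw [if_neg]; tauto
      · rw [qle] at hc; push_neg at hc; obtain ⟨i, h1, h2⟩ := hc
        refine (Finset.prod_eq_zero (Finset.mem_univ i) ?_).symm
        unfold gco; rw [if_neg]; tauto
  have : (∑ m ∈ suppOff S, if qle p m then (1 : ℝ) else 0)
      = ∑ m : Fin n → ZMod q, if (∀ i ∈ S, m i = 0) ∧ qle p m then (1 : ℝ) else 0 := by
    rw [suppOff, Finset.sum_filter]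
    exact Finset.sum_congr rfl fun m _ => by
      by_cases h1 : (∀ i ∈ S, m i = 0) <;> by_cases h2 : qle p m <;> simp [h1, h2]
  rw [this]
  simp only [e1]
  rw [sum_pi_prod]
  simp only [gco_sum]
  by_cases hp : ∀ i ∈ S, p i = 0
  · rw [if_pos hp, Finset.prod_ite]
    rw [Finset.prod_eq_one (fun i hi => by
      rw [Finset.mem_filter] at hi
      rw [if_pos (hp i hi.2)]), one_mul]
    rw [Finset.prod_ite, Finset.prod_const, Finset.prod_const, one_pow, mul_one,
      Finset.filter_filter]
  · rw [if_neg hp]; push_neg at hp; obtain ⟨i, hiS, hpi⟩ := hp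
    exact Finset.prod_eq_zero (Finset.mem_univ i) (by simp [hiS, hpi])

lemma uniformValue_eq (f : (Fin n → ZMod q) → ℝ) (S : Finset (Fin n)) :
    uniformValue f S
      = ∑ p ∈ suppOff S, (1 / (q : ℝ) ^ zeroNorm p) * qMobius f p := by
  have hq0 : (q : ℝ) ≠ 0 := Nat.cast_ne_zero.mpr (NeZero.ne q)
  have hf : ∀ m : Fin n → ZMod q, f m
      = ∑ p : Fin n → ZMod q, (if qle p m then (1 : ℝ) else 0) * qMobius f p := by
    intro m
    rw [← qMobius_inversion f m, Finset.sum_filter]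
    exact Finset.sum_congr rfl fun p _ => by by_cases h : qle p m <;> simp [h]
  have step : (∑ m ∈ suppOff S, f m)
      = ∑ p : Fin n → ZMod q,
          (if (∀ i ∈ S, p i = 0)
            then (q : ℝ) ^ ((Finset.univ.filter fun i => i ∉ S ∧ p i = 0).card) else 0)
            * qMobius f p := by
    calc (∑ m ∈ suppOff S, f m)
        = ∑ m ∈ suppOff S, ∑ p : Fin n → ZMod q,
            (if qle p m then (1 : ℝ) else 0) * qMobius f p :=
          Finset.sum_congr rfl fun m _ => hf m
      _ = ∑ p : Fin n → ZMod q, ∑ m ∈ suppOff S,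
            (if qle p m then (1 : ℝ) else 0) * qMobius f p := Finset.sum_comm
      _ = _ := Finset.sum_congr rfl fun p _ => by rw [← Finset.sum_mul, count_qle]
  rw [uniformValue, step, Finset.mul_sum, suppOff, Finset.sum_filter]
  refine Finset.sum_congr rfl fun p _ => ?_
  by_cases hp : ∀ i ∈ S, p i = 0
  · have hsub : (Finset.univ.filter fun i => p i ≠ 0) ⊆ Sᶜ := by
      intro i hi
      rw [Finset.mem_filter] at hi
      rw [Finset.mem_compl]
      exact fun hiS => hi.2 (hp i hiS)
    have heq : (Finset.univ.filter fun i => i ∉ S ∧ p i = 0)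
        = Sᶜ \ (Finset.univ.filter fun i => p i ≠ 0) := by
      ext i
      simp only [Finset.mem_filter, Finset.mem_univ, true_and, Finset.mem_sdiff,
        Finset.mem_compl, not_not]
    have hcard : (Finset.univ.filter fun i => i ∉ S ∧ p i = 0).card
        = (n - S.card) - zeroNorm p := by
      rw [heq, Finset.card_sdiff_of_subset hsub, Finset.card_compl, Fintype.card_fin, zeroNorm]
    have hle : zeroNorm p ≤ n - S.card := by
      rw [zeroNorm]
      calc (Finset.univ.filter fun i => p i ≠ 0).card ≤ Sᶜ.card := Finset.card_le_card hsub
        _ = n - S.card := by rw [Finset.card_compl, Fintype.card_fin]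
    have hpow : (q : ℝ) ^ (n - S.card)
        = (q : ℝ) ^ ((n - S.card) - zeroNorm p) * (q : ℝ) ^ zeroNorm p := by
      rw [← pow_add, Nat.sub_add_cancel hle]
    rw [if_pos hp, if_pos hp, hcard, hpow]
    have h1 : ((q : ℝ) ^ ((n - S.card) - zeroNorm p)) ≠ 0 := pow_ne_zero _ hq0
    have h2 : ((q : ℝ) ^ zeroNorm p) ≠ 0 := pow_ne_zero _ hq0
    field_simp
  · rw [if_neg hp, if_neg hp, zero_mul, mul_zero]

lemma setMobius_uniformValue (f : (Fin n → ZMod q) → ℝ) (S : Finset (Fin n)) :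
    setMobius (uniformValue f) S
      = (-1 : ℝ) ^ S.card *
          ∑ k ∈ Finset.univ.filter (fun k : Fin n → ZMod q => ∀ i ∈ S, k i ≠ 0),
            (1 / (q : ℝ) ^ zeroNorm k) * qMobius f k := by
  simp only [setMobius, uniformValue_eq, suppOff, Finset.mul_sum, Finset.sum_filter]
  rw [Finset.sum_comm]
  have inner : ∀ k : Fin n → ZMod q,
      (∑ T ∈ S.powerset,
          (-1 : ℝ) ^ (S.card - T.card) *
            if (∀ i ∈ T, k i = 0) then (1 / (q : ℝ) ^ zeroNorm k) * qMobius f k else 0)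
        = (-1 : ℝ) ^ S.card *
            (if (∀ i ∈ S, k i ≠ 0)
              then (1 / (q : ℝ) ^ zeroNorm k) * qMobius f k else 0) := by
    intro k
    simp only [mul_ite, mul_zero]
    have hps : S.powerset.filter (fun T => ∀ i ∈ T, k i = 0)
        = (S.filter fun i => k i = 0).powerset := by
      ext U
      simp only [Finset.mem_filter, Finset.mem_powerset, Finset.subset_iff]
      constructor
      · rintro ⟨h1, h2⟩ x hx
        exact ⟨h1 hx, h2 x hx⟩
      · intro h
        exact ⟨fun x hx => (h hx).1, fun x hx => (h hx).2⟩
    rw [← Finset.sum_filter, hps]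
    have hstep : (∑ U ∈ (S.filter fun i => k i = 0).powerset,
          (-1 : ℝ) ^ (S.card - U.card) * ((1 / (q : ℝ) ^ zeroNorm k) * qMobius f k))
        = ((-1 : ℝ) ^ S.card * ((1 / (q : ℝ) ^ zeroNorm k) * qMobius f k)) *
            ∑ U ∈ (S.filter fun i => k i = 0).powerset, (-1 : ℝ) ^ U.card := by
      rw [Finset.mul_sum]
      refine Finset.sum_congr rfl fun U hU => ?_
      have hUS : U.card ≤ S.card :=
        Finset.card_le_card ((Finset.mem_powerset.mp hU).trans (Finset.filter_subset _ _))
      rw [neg_one_sub hUS]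
      ring
    rw [hstep, sum_powerset_neg_one_real]
    by_cases hk : ∀ i ∈ S, k i ≠ 0
    · rw [if_pos hk, if_pos (Finset.filter_eq_empty_iff.mpr hk)]
      ring
    · rw [if_neg hk, if_neg (fun h => hk fun i hi => Finset.filter_eq_empty_iff.mp h hi)]
      simp
  exact Finset.sum_congr rfl fun k _ => inner k

lemma setMobius_uniformValue_vanish (f : (Fin n → ZMod q) → ℝ) {ℓ : ℕ}
    (hM : ∀ k : Fin n → ZMod q, ℓ < zeroNorm k → qMobius f k = 0)
    (S : Finset (Fin n)) (hS : ℓ < S.card) :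
    setMobius (uniformValue f) S = 0 := by
  rw [setMobius_uniformValue]
  rw [Finset.sum_eq_zero, mul_zero]
  intro k hk
  rw [Finset.mem_filter] at hk
  have hcard : S.card ≤ zeroNorm k := by
    refine Finset.card_le_card fun i hi => ?_
    rw [Finset.mem_filter]
    exact ⟨Finset.mem_univ i, hk.2 i hi⟩
  rw [hM k (lt_of_lt_of_le hS hcard), mul_zero]

end Aux

theorem faithShap_from_qary_mobius (q n : ℕ) [NeZero q] (hq : 2 ≤ q) (hn : 1 ≤ n)
    (f : (Fin n → ZMod q) → ℝ) (ℓ : ℕ) (hℓ : 1 ≤ ℓ)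
    (hM : ∀ k : Fin n → ZMod q, ℓ < zeroNorm k → qMobius f k = 0)
    (T : Finset (Fin n)) (hT : T.card ≤ ℓ) :
    faithShap (uniformValue f) ℓ T =
      (-1 : ℝ) ^ T.card *
        ∑ k ∈ Finset.univ.filter (fun k : Fin n → ZMod q => ∀ i ∈ T, k i ≠ 0),
          (1 / (q : ℝ) ^ zeroNorm k) * qMobius f k := by
  rw [faithShap]
  have hzero : (∑ S ∈ (Finset.univ : Finset (Fin n)).powerset.filter
        (fun S => T ⊂ S ∧ ℓ < S.card),
        (((S.card - 1).choose ℓ : ℝ) / ((S.card + ℓ - 1).choose (ℓ + T.card) : ℝ)) *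
          setMobius (uniformValue f) S) = 0 :=
    Finset.sum_eq_zero fun S hS => by
      rw [Finset.mem_filter] at hS
      rw [setMobius_uniformValue_vanish f hM S hS.2.2, mul_zero]
  rw [hzero, mul_zero, add_zero, setMobius_uniformValue]
end
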